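/- If a random unit vector a ∈ ℝ³ is uniformly distributed on the unit sphere, γ is a random angle with arbitrary distribution independent of a, and x ∈ ℝ³ is a fixed unit vector, then for any angle β the random vector M(β x)·M(γ a)·x has the same distribution as y = M(γ a)·x; i.e., the law of y is invariant under rotations about the axis x. -/

import Mathlib

/-!
`M(βx)` is a rotation fixing `x`, and Rodrigues' formula is equivariant: for a rotation `Q`,
`Q M(γa) = M(γ·Qa) Q`, because `Qᵀ [Qa]× Q = det Q • [a]×`. Hence with `Q = M(βx)` we get
`M(βx) M(γa) x = M(γ·Qa) x`. Since `Qa` is again uniform and independent of `γ`, the pair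
`(γ, Qa)` has the same joint law as `(γ, a)`, and the two vectors have the same law.
-/

open Matrix MeasureTheory ProbabilityTheory

/-- The cross-product matrix `[a]×`. -/
def crossMat (a : Fin 3 → ℝ) : Matrix (Fin 3) (Fin 3) ℝ :=
  !![0, -a 2, a 1; a 2, 0, -a 0; -a 1, a 0, 0]

/-- `M(θa) = I₃ + sin(2θ)[a]× + (1 − cos(2θ))[a]×²`. -/
noncomputable def Mrot (θ : ℝ) (a : Fin 3 → ℝ) : Matrix (Fin 3) (Fin 3) ℝ :=
  1 + Real.sin (2 * θ) • crossMat a + (1 - Real.cos (2 * θ)) • (crossMat a * crossMat a)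

/-- The uniform (normalized rotation-invariant) probability distribution on the unit
sphere `S² ⊂ ℝ³`, characterized as a rotation-invariant probability measure carried by
the unit sphere. -/
def IsUniformOnSphere (ν : MeasureTheory.Measure (Fin 3 → ℝ)) : Prop :=
  MeasureTheory.IsProbabilityMeasure ν ∧
  (∀ᵐ v ∂ν, v 0 ^ 2 + v 1 ^ 2 + v 2 ^ 2 = 1) ∧
  ∀ Q : Matrix (Fin 3) (Fin 3) ℝ, Q * Qᵀ = 1 → Q.det = 1 → ν.map Q.mulVec = ν

theorem IndepFun.map_prodMk_congr_right {Ω α β : Type*} [MeasurableSpace Ω]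
    [MeasurableSpace α] [MeasurableSpace β] {μ : Measure Ω} [IsFiniteMeasure μ]
    {X : Ω → α} {Y Y' : Ω → β} (hX : Measurable X) (hY : Measurable Y) (hY' : Measurable Y')
    (hXY : IndepFun X Y μ) (hXY' : IndepFun X Y' μ) (hlaw : μ.map Y = μ.map Y') :
    μ.map (fun ω => (X ω, Y ω)) = μ.map (fun ω => (X ω, Y' ω)) := by
  rw [hXY.map_prod_eq_prod_map_map hX.aemeasurable hY.aemeasurable,
    hXY'.map_prod_eq_prod_map_map hX.aemeasurable hY'.aemeasurable, hlaw]

theorem one_add_smul_add_smul_mul_one_sub_smul_add_smul {A : Type*} [Ring A] [Algebra ℝ A]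
    {K : A} (hK : K * K * K = -K) {s c : ℝ} (hsc : s ^ 2 + c ^ 2 = 1) :
    (1 + s • K + (1 - c) • (K * K)) * (1 - s • K + (1 - c) • (K * K)) = 1 := by
  simp only [add_mul, mul_add, mul_sub, smul_mul_assoc, mul_smul_comm, one_mul, mul_one,
    ← mul_assoc, hK, neg_mul]
  linear_combination (norm := module) (-1 : ℝ) • hsc • (K * K)

theorem crossMat_transpose (a : Fin 3 → ℝ) : (crossMat a)ᵀ = -crossMat a := by
  ext i j
  fin_cases i <;> fin_cases j <;> simp [crossMat]

theorem crossMat_mulVec_self (a : Fin 3 → ℝ) : crossMat a *ᵥ a = 0 := by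
  ext i
  fin_cases i <;> simp [crossMat, mulVec, dotProduct, Fin.sum_univ_three] <;> ring

theorem crossMat_mul_crossMat_mul_crossMat (a : Fin 3 → ℝ) :
    crossMat a * crossMat a * crossMat a = -(a 0 ^ 2 + a 1 ^ 2 + a 2 ^ 2) • crossMat a := by
  ext i j
  fin_cases i <;> fin_cases j <;> simp [crossMat, mul_apply, Fin.sum_univ_three] <;> ring

theorem transpose_mul_crossMat_mulVec_mul (A : Matrix (Fin 3) (Fin 3) ℝ) (a : Fin 3 → ℝ) :
    Aᵀ * crossMat (A *ᵥ a) * A = A.det • crossMat a := by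
  ext i j
  fin_cases i <;> fin_cases j <;>
    simp [crossMat, mul_apply, mulVec, dotProduct, Fin.sum_univ_three, det_fin_three] <;> ring

theorem Mrot_mulVec_self (θ : ℝ) (a : Fin 3 → ℝ) : Mrot θ a *ᵥ a = a := by
  simp [Mrot, add_mulVec, smul_mulVec, ← mulVec_mulVec, crossMat_mulVec_self]

theorem continuous_Mrot : Continuous fun p : ℝ × (Fin 3 → ℝ) => Mrot p.1 p.2 := by
  unfold Mrot crossMat
  fun_prop

theorem det_Mrot (θ : ℝ) (a : Fin 3 → ℝ) (ha : a 0 ^ 2 + a 1 ^ 2 + a 2 ^ 2 = 1) :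
    (Mrot θ a).det = 1 := by
  have hs := Real.sin_sq_add_cos_sq (2 * θ)
  simp only [Mrot, crossMat, Fin.isValue, smul_of, smul_cons, smul_eq_mul, mul_zero, mul_neg,
    smul_empty, cons_mul, Nat.succ_eq_add_one, Nat.reduceAdd, vecMul_cons, head_cons, zero_smul,
    tail_cons, neg_smul, neg_cons, neg_zero, neg_neg, neg_empty, empty_vecMul, add_zero, add_cons,
    zero_add, empty_add_empty, empty_mul, Equiv.symm_apply_apply, det_fin_three, Matrix.add_apply,
    one_apply, ↓reduceIte, of_apply, cons_val', cons_val_zero, cons_val_fin_one, cons_val_one,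
    cons_val, Fin.reduceEq, zero_ne_one, one_ne_zero]
  linear_combination ((a 0 ^ 2 + a 1 ^ 2 + a 2 ^ 2) * (1 - Real.cos (2 * θ)) ^ 2) * ha +
    (a 0 ^ 2 + a 1 ^ 2 + a 2 ^ 2) * hs

theorem Mrot_mul_transpose (θ : ℝ) (a : Fin 3 → ℝ) (ha : a 0 ^ 2 + a 1 ^ 2 + a 2 ^ 2 = 1) :
    Mrot θ a * (Mrot θ a)ᵀ = 1 := by
  have hK := crossMat_mul_crossMat_mul_crossMat a
  rw [ha, neg_one_smul] at hK
  simp only [Mrot, transpose_add, transpose_smul, transpose_one, transpose_mul, crossMat_transpose,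
    neg_mul_neg, smul_neg, ← sub_eq_add_neg]
  exact one_add_smul_add_smul_mul_one_sub_smul_add_smul hK (Real.sin_sq_add_cos_sq _)

theorem crossMat_mulVec_mul {Q : Matrix (Fin 3) (Fin 3) ℝ} (hQ : Q * Qᵀ = 1) (hdet : Q.det = 1)
    (a : Fin 3 → ℝ) : crossMat (Q *ᵥ a) * Q = Q * crossMat a := by
  have h := transpose_mul_crossMat_mulVec_mul Q a
  rw [hdet, one_smul] at h
  rw [← h, ← mul_assoc, ← mul_assoc, hQ, one_mul]

theorem Mrot_mulVec_mul {Q : Matrix (Fin 3) (Fin 3) ℝ} (hQ : Q * Qᵀ = 1) (hdet : Q.det = 1)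
    (θ : ℝ) (a : Fin 3 → ℝ) : Mrot θ (Q *ᵥ a) * Q = Q * Mrot θ a := by
  simp only [Mrot, add_mul, mul_add, smul_mul_assoc, mul_smul_comm, one_mul, mul_one, mul_assoc,
    crossMat_mulVec_mul hQ hdet]
  simp only [← mul_assoc, crossMat_mulVec_mul hQ hdet]

/-- If `a` is uniform on the sphere, `γ` is an independent random angle and `x` a fixed
unit vector, then for any angle `β` the vector `M(βx)·M(γa)·x` has the same distribution
as `y = M(γa)·x`: the law of `y` is invariant under rotations about `x`. -/
theorem law_invariant_about_axis {Ω : Type*} [MeasurableSpace Ω]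
    (μ : Measure Ω) [IsProbabilityMeasure μ]
    (a : Ω → (Fin 3 → ℝ)) (γ : Ω → ℝ) (ha : Measurable a) (hγ : Measurable γ)
    (haU : IsUniformOnSphere (μ.map a)) (hindep : IndepFun γ a μ)
    (x : Fin 3 → ℝ) (hx : x 0 ^ 2 + x 1 ^ 2 + x 2 ^ 2 = 1) (β : ℝ) :
    μ.map (fun ω => (Mrot β x).mulVec ((Mrot (γ ω) (a ω)).mulVec x)) =
      μ.map (fun ω => (Mrot (γ ω) (a ω)).mulVec x) := by
  set Q := Mrot β x
  have hQ := Mrot_mul_transpose β x hx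
  have hdet := det_Mrot β x hx
  have hQm : Measurable Q.mulVec := (continuous_const.matrix_mulVec continuous_id).measurable
  have hF : Measurable fun p : ℝ × (Fin 3 → ℝ) => Mrot p.1 p.2 *ᵥ x :=
    (continuous_Mrot.matrix_mulVec continuous_const).measurable
  have hcomm (θ : ℝ) (v : Fin 3 → ℝ) : Q *ᵥ (Mrot θ v *ᵥ x) = Mrot θ (Q *ᵥ v) *ᵥ x := by
    rw [mulVec_mulVec, ← Mrot_mulVec_mul hQ hdet, ← mulVec_mulVec, Mrot_mulVec_self]
  have hlaw : μ.map (Q.mulVec ∘ a) = μ.map a := by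
    rw [← Measure.map_map hQm ha, haU.2.2 Q hQ hdet]
  calc μ.map (fun ω => Q *ᵥ (Mrot (γ ω) (a ω) *ᵥ x))
      = (μ.map fun ω => (γ ω, (Q.mulVec ∘ a) ω)).map fun p => Mrot p.1 p.2 *ᵥ x := by
        rw [Measure.map_map hF (hγ.prodMk (hQm.comp ha))]
        simp only [Function.comp_def, hcomm]
    _ = (μ.map fun ω => (γ ω, a ω)).map fun p => Mrot p.1 p.2 *ᵥ x := by
        rw [IndepFun.map_prodMk_congr_right hγ (hQm.comp ha) ha (hindep.comp measurable_id hQm)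
          hindep hlaw]
    _ = μ.map fun ω => Mrot (γ ω) (a ω) *ᵥ x := Measure.map_map hF (hγ.prodMk ha)
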